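/- arXiv:1007.3878 — 3 statements merged into one kernel-verified Lean document; each statement's English description precedes it below -/
import Mathlib

section
/- Let m ≥ 2, let C_1, …, C_m ≥ 0 be integers with C_1 + ⋯ + C_m = B, and let n_1, …, n_m ≥ 1 be natural numbers. Then (n_1 + ⋯ + n_m)^(6(B+1)) ≥ n_1^(6(C_1+1)) + ⋯ + n_m^(6(C_m+1)) + 3m + 1. -/
/-!
Every summand satisfies `n_i ^ (6 (C_i + 1)) ≤ S ^ (6 B) * n_i ^ 6` with `S = ∑ n_i`, so it suffices
to show `∑ n_i ^ 6 + 3m + 1 ≤ S ^ 6`. Since `(a + b) ^ 6 ≥ a ^ 6 + b ^ 6 + 7` for `a, b ≥ 1`,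
induction on the number of summands gives `∑ n_i ^ 6 + 7 (m - 1) ≤ S ^ 6`, and `7 (m - 1) ≥ 3m + 1`
once `m ≥ 2`.
-/

open Finset

lemma pow_six_add_pow_six_add_seven_le {a b : ℕ} (ha : 1 ≤ a) (hb : 1 ≤ b) :
    a ^ 6 + b ^ 6 + 7 ≤ (a + b) ^ 6 := by
  have h₁ : 1 ≤ a ^ 5 * b := Nat.one_le_iff_ne_zero.mpr (by positivity)
  have h₂ : 1 ≤ a ^ 4 * b ^ 2 := Nat.one_le_iff_ne_zero.mpr (by positivity)
  nlinarith [Nat.zero_le (a ^ 3 * b ^ 3), Nat.zero_le (a ^ 2 * b ^ 4), Nat.zero_le (a * b ^ 5)]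

lemma Finset.sum_pow_six_add_le_sum_pow_six {ι : Type*} {s : Finset ι} (hs : s.Nonempty)
    {n : ι → ℕ} (hn : ∀ i ∈ s, 1 ≤ n i) :
    ∑ i ∈ s, n i ^ 6 + 7 * (#s - 1) ≤ (∑ i ∈ s, n i) ^ 6 := by
  induction hs using Finset.Nonempty.cons_induction with
  | singleton i => simp
  | cons i s hi hs ih =>
    simp only [sum_cons, card_cons, forall_mem_cons] at hn ⊢
    have hsum : 1 ≤ ∑ j ∈ s, n j :=
      (hn.2 _ hs.choose_spec).trans (single_le_sum (fun _ _ ↦ Nat.zero_le _) hs.choose_spec)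
    have hstep := pow_six_add_pow_six_add_seven_le hn.1 hsum
    have hcard : 1 ≤ #s := card_pos.mpr hs
    have := ih hn.2
    omega

lemma pow_add_le_pow_mul_pow {a s c d k : ℕ} (has : a ≤ s) (hs : 1 ≤ s) (hcd : c ≤ d) :
    a ^ (c + k) ≤ s ^ d * a ^ k := by
  rw [pow_add]
  exact Nat.mul_le_mul_right _ ((Nat.pow_le_pow_left has c).trans (Nat.pow_le_pow_right hs hcd))

theorem stmt2 {m B : ℕ} (hm : 2 ≤ m) (C : Fin m → ℕ) (hC : ∑ i, C i = B)
    (n : Fin m → ℕ) (hn : ∀ i, 1 ≤ n i) :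
    (∑ i, n i ^ (6 * (C i + 1))) + 3 * m + 1 ≤ (∑ i, n i) ^ (6 * (B + 1)) := by
  set S := ∑ i, n i
  have hle_S : ∀ i, n i ≤ S := fun i ↦ single_le_sum (fun _ _ ↦ Nat.zero_le _) (mem_univ i)
  have hS : 1 ≤ S := (hn ⟨0, by omega⟩).trans (hle_S _)
  have hsummands : ∑ i, n i ^ (6 * (C i + 1)) ≤ S ^ (6 * B) * ∑ i, n i ^ 6 := by
    rw [mul_sum]
    refine sum_le_sum fun i _ ↦ ?_
    have hCB : C i ≤ B := hC ▸ single_le_sum (fun _ _ ↦ Nat.zero_le _) (mem_univ i)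
    rw [mul_add_one]
    exact pow_add_le_pow_mul_pow (hle_S i) hS (by omega)
  have hsix : ∑ i, n i ^ 6 + (3 * m + 1) ≤ S ^ 6 := by
    have h : ∑ i, n i ^ 6 + 7 * (m - 1) ≤ S ^ 6 := by
      simpa using sum_pow_six_add_le_sum_pow_six (s := univ) ⟨⟨0, by omega⟩, mem_univ _⟩
        fun i _ ↦ hn i
    omega
  calc ∑ i, n i ^ (6 * (C i + 1)) + 3 * m + 1
      ≤ S ^ (6 * B) * ∑ i, n i ^ 6 + S ^ (6 * B) * (3 * m + 1) := by
        have := Nat.le_mul_of_pos_left (3 * m + 1) (Nat.pow_pos (n := 6 * B) hS)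
        omega
    _ = S ^ (6 * B) * (∑ i, n i ^ 6 + (3 * m + 1)) := by ring
    _ ≤ S ^ (6 * B) * S ^ 6 := Nat.mul_le_mul_left _ hsix
    _ = S ^ (6 * (B + 1)) := by ring
end

section
/- Suppose P : ℕ → ℕ → ℕ (written P_B(n)) is a family of non-decreasing functions satisfying: (0) P_{B+1}(n) ≥ P_B(n) for n ≥ 1; (1) P_B(n) ≥ 3 for n ≥ 1; (2) P_B(n_1+⋯+n_m) ≥ P_{C_1}(n_1)+⋯+P_{C_m}(n_m)+1 whenever m ≥ 2, C_1+⋯+C_m = B, each n_i ≥ 1; (4) P_B(n+1) ≥ P_B(n)+1 for n ≥ 1; (5) P_B(n_1+⋯+n_m) ≥ P_{C_1}(n_1)⋯P_{C_m}(n_m)+3 whenever C_1+⋯+C_m = B−m+1, B ≥ m−1 ≥ 1, each n_i ≥ 1. Then the family P_B(n) = max(3, n^(6(B+1))) satisfies all these conditions. -/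
def P (B n : ℕ) : ℕ := max 3 (n ^ (6 * (B + 1)))

/-!
With `E = 6 (B + 1)`, the inequality `a ^ E + b ^ E + E ≤ (a + b) ^ E` for `a, b ≥ 1` leaves
enough room to absorb the constants that the `max` with `3` and conditions (2), (4), (5) add.
This settles the two-term cases; for products, the exponents `6 (C₁ + 1)` and `6 (C₂ + 1)` add
up to the exponent of `P (C₁ + C₂ + 1)`. The general cases then follow by induction on the
number of terms.
-/

open Finset

lemma pow_add_pow_add_le_add_pow {a b n : ℕ} (ha : 1 ≤ a) (hb : 1 ≤ b) (hn : 2 ≤ n) :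
    a ^ n + b ^ n + n ≤ (a + b) ^ n := by
  induction n, hn using Nat.le_induction with
  | base => nlinarith
  | succ k _ ih =>
    have : 1 ≤ a ^ k := Nat.one_le_pow _ _ ha
    have : 1 ≤ b ^ k := Nat.one_le_pow _ _ hb
    calc a ^ (k + 1) + b ^ (k + 1) + (k + 1) ≤ (a ^ k + b ^ k + k) * (a + b) := by
          rw [pow_succ, pow_succ]; nlinarith
      _ ≤ (a + b) ^ k * (a + b) := Nat.mul_le_mul_right _ ih
      _ = (a + b) ^ (k + 1) := (pow_succ _ _).symm

lemma one_le_sum_fin_succ {m : ℕ} {n : Fin (m + 1) → ℕ} (hn : ∀ i, 1 ≤ n i) :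
    1 ≤ ∑ i, n i :=
  (hn 0).trans (single_le_sum (fun i _ => Nat.zero_le (n i)) (mem_univ 0))

namespace P

lemma monotone (B : ℕ) : Monotone (P B) :=
  fun _ _ h => max_le_max le_rfl (Nat.pow_le_pow_left h _)

lemma mono_left {B C n : ℕ} (hBC : B ≤ C) (hn : 1 ≤ n) : P B n ≤ P C n :=
  max_le_max le_rfl (Nat.pow_le_pow_right hn (by omega))

lemma three_le (B n : ℕ) : 3 ≤ P B n := le_max_left _ _

lemma pow_le (B n : ℕ) : n ^ (6 * (B + 1)) ≤ P B n := le_max_right _ _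

lemma one_right (B : ℕ) : P B 1 = 3 := by simp [P]

lemma le_pow_add_two {B n : ℕ} (hn : 1 ≤ n) : P B n ≤ n ^ (6 * (B + 1)) + 2 :=
  max_le (by have := Nat.one_le_pow (6 * (B + 1)) n hn; omega) (by omega)

lemma le_pow_of_le {B n N : ℕ} (hnN : n ≤ N) (hN : 2 ≤ N) : P B n ≤ N ^ (6 * (B + 1)) := by
  refine max_le ?_ (Nat.pow_le_pow_left hnN _)
  calc 3 ≤ 2 ^ 6 := by norm_num
    _ ≤ 2 ^ (6 * (B + 1)) := Nat.pow_le_pow_right (by norm_num) (by omega)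
    _ ≤ N ^ (6 * (B + 1)) := Nat.pow_le_pow_left hN _

lemma add_one_le_succ {B n : ℕ} (hn : 1 ≤ n) : P B n + 1 ≤ P B (n + 1) := by
  have hgap := pow_add_pow_add_le_add_pow (n := 6 * (B + 1)) hn le_rfl (by omega)
  rw [one_pow] at hgap
  have := le_pow_add_two (B := B) hn
  have := pow_le B (n + 1)
  omega

lemma add_add_one_le {C D a b : ℕ} (ha : 1 ≤ a) (hb : 1 ≤ b) :
    P C a + P D b + 1 ≤ P (C + D) (a + b) := by
  have hCa := (mono_left (B := C) (C := C + D) (by omega) ha).trans (le_pow_add_two ha)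
  have hDb := (mono_left (B := D) (C := C + D) (by omega) hb).trans (le_pow_add_two hb)
  have := pow_add_pow_add_le_add_pow (n := 6 * (C + D + 1)) ha hb (by omega)
  have := pow_le (C + D) (a + b)
  omega

lemma mul_add_three_le_of_two_le {C D a b : ℕ} (ha : 2 ≤ a) (hb : 1 ≤ b) :
    P C a * P D b + 3 ≤ P (C + D + 1) (a + b) := by
  have hgap : a ^ (6 * (C + 1)) + 6 ≤ (a + b) ^ (6 * (C + 1)) := by
    have := pow_add_pow_add_le_add_pow (n := 6 * (C + 1)) (by omega : 1 ≤ a) hb (by omega)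
    omega
  have hF : 1 ≤ (a + b) ^ (6 * (D + 1)) := Nat.one_le_pow _ _ (by omega)
  calc P C a * P D b + 3 ≤ a ^ (6 * (C + 1)) * (a + b) ^ (6 * (D + 1)) + 3 := by
        gcongr
        · exact le_pow_of_le le_rfl ha
        · exact le_pow_of_le (by omega) (by omega)
    _ ≤ (a ^ (6 * (C + 1)) + 6) * (a + b) ^ (6 * (D + 1)) := by nlinarith
    _ ≤ (a + b) ^ (6 * (C + 1)) * (a + b) ^ (6 * (D + 1)) := by gcongr
    _ = (a + b) ^ (6 * (C + D + 1 + 1)) := by rw [← pow_add]; congr 1; ring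
    _ ≤ P (C + D + 1) (a + b) := pow_le _ _

lemma mul_add_three_le {C D a b : ℕ} (ha : 1 ≤ a) (hb : 1 ≤ b) :
    P C a * P D b + 3 ≤ P (C + D + 1) (a + b) := by
  rcases Nat.lt_or_ge 1 a with ha2 | ha1
  · exact mul_add_three_le_of_two_le ha2 hb
  rcases Nat.lt_or_ge 1 b with hb2 | hb1
  · rw [mul_comm, add_comm C, add_comm a]
    exact mul_add_three_le_of_two_le hb2 ha
  obtain rfl : a = 1 := by omega
  obtain rfl : b = 1 := by omega
  rw [one_right, one_right]
  calc 3 * 3 + 3 ≤ 2 ^ 12 := by norm_num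
    _ ≤ 2 ^ (6 * (C + D + 1 + 1)) := Nat.pow_le_pow_right (by norm_num) (by omega)
    _ ≤ P (C + D + 1) (1 + 1) := pow_le _ _

lemma sum_add_le_sum : ∀ {m : ℕ} (C n : Fin (m + 1) → ℕ), (∀ i, 1 ≤ n i) →
    ∑ i, P (C i) (n i) + m ≤ P (∑ i, C i) (∑ i, n i)
  | 0, C, n, _ => by simp
  | m + 1, C, n, hn => by
    rw [Fin.sum_univ_succ, Fin.sum_univ_succ C, Fin.sum_univ_succ n]
    have ih := sum_add_le_sum (fun i => C i.succ) (fun i => n i.succ) (fun i => hn i.succ)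
    have := add_add_one_le (C := C 0) (D := ∑ i : Fin (m + 1), C i.succ) (hn 0)
      (one_le_sum_fin_succ fun i => hn i.succ)
    omega

lemma prod_add_three_le_sum : ∀ {m : ℕ} (C n : Fin (m + 2) → ℕ), (∀ i, 1 ≤ n i) →
    ∏ i, P (C i) (n i) + 3 ≤ P (∑ i, C i + (m + 1)) (∑ i, n i)
  | m, C, n, hn => by
    rw [Fin.prod_univ_succ, Fin.sum_univ_succ C, Fin.sum_univ_succ n]
    have hrest : ∏ i : Fin (m + 1), P (C i.succ) (n i.succ)
        ≤ P (∑ i : Fin (m + 1), C i.succ + m) (∑ i : Fin (m + 1), n i.succ) := by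
      match m with
      | 0 => simp
      | k + 1 => exact (Nat.le_add_right _ 3).trans (prod_add_three_le_sum _ _ fun i => hn i.succ)
    have hstep := mul_add_three_le (C := C 0) (D := ∑ i : Fin (m + 1), C i.succ + m) (hn 0)
      (one_le_sum_fin_succ fun i => hn i.succ)
    rw [show C 0 + ∑ i : Fin (m + 1), C i.succ + (m + 1)
      = C 0 + (∑ i : Fin (m + 1), C i.succ + m) + 1 by ring]
    exact (Nat.add_le_add_right (Nat.mul_le_mul_left _ hrest) 3).trans hstep

end P

theorem stmt6 :
    (∀ B : ℕ, Monotone (P B)) ∧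
    (∀ B n : ℕ, 1 ≤ n → P B n ≤ P (B + 1) n) ∧
    (∀ B n : ℕ, 1 ≤ n → 3 ≤ P B n) ∧
    (∀ (m B : ℕ) (C n : Fin m → ℕ), 2 ≤ m → (∑ i, C i) = B → (∀ i, 1 ≤ n i) →
      (∑ i, P (C i) (n i)) + 1 ≤ P B (∑ i, n i)) ∧
    (∀ B n : ℕ, 1 ≤ n → P B n + 1 ≤ P B (n + 1)) ∧
    (∀ (m B : ℕ) (C n : Fin m → ℕ), 2 ≤ m → m - 1 ≤ B → (∑ i, C i) + m = B + 1 →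
      (∀ i, 1 ≤ n i) → (∏ i, P (C i) (n i)) + 3 ≤ P B (∑ i, n i)) := by
  refine ⟨P.monotone, fun B n hn => P.mono_left (Nat.le_succ B) hn,
    fun B n _ => P.three_le B n, ?_, fun B n hn => P.add_one_le_succ hn, ?_⟩
  · intro m B C n hm hC hn
    obtain ⟨k, rfl⟩ : ∃ k, m = k + 1 := ⟨m - 1, by omega⟩
    have := P.sum_add_le_sum C n hn
    subst hC
    omega
  · intro m B C n hm _ hsum hn
    obtain ⟨k, rfl⟩ : ∃ k, m = k + 2 := ⟨m - 2, by omega⟩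
    obtain rfl : B = ∑ i, C i + (k + 1) := by omega
    exact P.prod_add_three_le_sum C n hn
end

section
/- For natural numbers n₁, …, n_m each ≥ 1 with m ≥ 2, and any k ≥ 3: (n₁ + ⋯ + n_m)^(2k) ≥ (n₁² + ⋯ + n_m² + 2·n₁·n₂)^k ≥ (n₁² + ⋯ + n_m² + 1)^k + 1 ≥ (n₁^(2k) + ⋯ + n_m^(2k)) + 3m + 1. -/
lemma aux_sum_pow_le {ι : Type*} (s : Finset ι) (f : ι → ℕ) (k : ℕ) (hk : k ≠ 0) :
    ∑ i ∈ s, f i ^ k ≤ (∑ i ∈ s, f i) ^ k := by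
  induction s using Finset.cons_induction with
  | empty => simp [Nat.zero_pow (Nat.pos_of_ne_zero hk)]
  | cons a s ha ih =>
    simp only [Finset.sum_cons]
    calc f a ^ k + ∑ i ∈ s, f i ^ k ≤ f a ^ k + (∑ i ∈ s, f i) ^ k := by
          exact Nat.add_le_add_left ih _
      _ ≤ (f a + ∑ i ∈ s, f i) ^ k := pow_add_pow_le (Nat.zero_le _) (Nat.zero_le _) hk

theorem stmt17 {m : ℕ} (hm : 2 ≤ m) (n : Fin m → ℕ) (hn : ∀ i, 1 ≤ n i)
    (k : ℕ) (hk : 3 ≤ k) :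
    (∑ i, n i ^ 2 + 2 * n ⟨0, by omega⟩ * n ⟨1, by omega⟩) ^ k ≤ (∑ i, n i) ^ (2 * k) ∧
    (∑ i, n i ^ 2 + 1) ^ k + 1 ≤ (∑ i, n i ^ 2 + 2 * n ⟨0, by omega⟩ * n ⟨1, by omega⟩) ^ k ∧
    (∑ i, n i ^ (2 * k)) + 3 * m + 1 ≤ (∑ i, n i ^ 2 + 1) ^ k + 1 := by
  set i0 : Fin m := ⟨0, by omega⟩
  set i1 : Fin m := ⟨1, by omega⟩
  set S := ∑ i, n i with hS
  set Q := ∑ i, n i ^ 2 with hQ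
  have hk0 : k ≠ 0 := by omega
  have hQm : m ≤ Q := by
    calc m = ∑ _i : Fin m, 1 := by simp
      _ ≤ Q := Finset.sum_le_sum fun i _ => Nat.one_le_pow _ _ (hn i)
  -- key: Q + 2 n₀ n₁ ≤ S ^ 2
  have hne : i0 ≠ i1 := by simp [i0, i1, Fin.ext_iff]
  have key : Q + 2 * n i0 * n i1 ≤ S ^ 2 := by
    have h1 : S = n i0 + n i1 + ∑ i ∈ Finset.univ \ {i0, i1}, n i := by
      rw [hS, ← Finset.sum_sdiff (Finset.subset_univ {i0, i1}),
        Finset.sum_pair hne]; ring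
    have h2 : Q = n i0 ^ 2 + n i1 ^ 2 + ∑ i ∈ Finset.univ \ {i0, i1}, n i ^ 2 := by
      rw [hQ, ← Finset.sum_sdiff (Finset.subset_univ {i0, i1}),
        Finset.sum_pair hne]; ring
    have h3 : ∑ i ∈ Finset.univ \ {i0, i1}, n i ^ 2 ≤
        (∑ i ∈ Finset.univ \ {i0, i1}, n i) ^ 2 := aux_sum_pow_le _ _ 2 (by norm_num)
    rw [h1, h2]; nlinarith [Nat.zero_le (∑ i ∈ Finset.univ \ {i0, i1}, n i)]
  refine ⟨?_, ?_, ?_⟩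
  · calc (Q + 2 * n i0 * n i1) ^ k ≤ (S ^ 2) ^ k := Nat.pow_le_pow_left key k
      _ = S ^ (2 * k) := by rw [← pow_mul]
  · have h2 : Q + 2 ≤ Q + 2 * n i0 * n i1 := by
      have := hn i0; have := hn i1; nlinarith
    calc (Q + 1) ^ k + 1 ≤ (Q + 2) ^ k := by
          have : (Q + 1) ^ k < (Q + 2) ^ k :=
            Nat.pow_lt_pow_left (by omega) hk0
          omega
      _ ≤ (Q + 2 * n i0 * n i1) ^ k := Nat.pow_le_pow_left h2 k
  · have hsum : ∑ i, n i ^ (2 * k) ≤ Q ^ k := by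
      calc ∑ i, n i ^ (2 * k) = ∑ i, (n i ^ 2) ^ k := by
            simp [← pow_mul, Nat.mul_comm]
        _ ≤ Q ^ k := aux_sum_pow_le _ _ k hk0
    have hbin : Q ^ k + 3 * Q ^ 2 ≤ (Q + 1) ^ k := by
      have h3 : Q ^ 3 + 3 * Q ^ 2 ≤ (Q + 1) ^ 3 := by ring_nf; nlinarith
      calc Q ^ k + 3 * Q ^ 2 = Q ^ (k - 3) * Q ^ 3 + 3 * Q ^ 2 := by
            rw [← pow_add]; congr 2; omega
        _ ≤ Q ^ (k - 3) * Q ^ 3 + Q ^ (k - 3) * (3 * Q ^ 2) := by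
            have h1 : 1 ≤ Q ^ (k - 3) := Nat.one_le_pow _ _ (by omega)
            nlinarith
        _ = Q ^ (k - 3) * (Q ^ 3 + 3 * Q ^ 2) := by ring
        _ ≤ Q ^ (k - 3) * (Q + 1) ^ 3 := Nat.mul_le_mul_left _ h3
        _ ≤ (Q + 1) ^ (k - 3) * (Q + 1) ^ 3 := by
            exact Nat.mul_le_mul_right _ (Nat.pow_le_pow_left (by omega) _)
        _ = (Q + 1) ^ k := by rw [← pow_add]; congr 1; omega
    have hQ2 : m ≤ Q ^ 2 := le_trans hQm (Nat.le_self_pow (by norm_num) _)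
    omega
end
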